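/- There exists a constant μ₀ = μ₀(A₀, 𝒜, b) > 0 such that if μ := max{λ₂max, λ₃max}/λ₁min ≤ μ₀, then the Tikhonov functional Φ(y,x) = ‖b - A₀x - 𝒜(y,x)‖²_{Γ₁⁻¹} + ‖y‖²_{Γ₂⁻¹} + ‖x‖²_{Γ₃⁻¹} has a unique global minimizer, which lies in an origin-centered ball on which Φ is strictly convex. -/

import Mathlib

/-!
Write `m = max(λ₂max, λ₃max)`, `α = λ₁min` and `r(y, x) = b - A₀x - 𝒜(y, x)`.

The prior terms are strongly convex: along a segment they gain `a(1-a)` times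
`‖δy‖²_{Γ₂⁻¹} + ‖δx‖²_{Γ₃⁻¹} ≥ (‖δy‖² + ‖δx‖²) / m`. The residual is affine up to the bilinear
term, `r(a z + (1-a) w) = a r(z) + (1-a) r(w) + a(1-a) 𝒜(δy, δx)`, so on a ball where
`‖r‖ ≤ R` the data term loses at most `a(1-a) · 2R‖𝒜‖ ‖δy‖ ‖δx‖ / α` of convexity. Hence `Φ` is
strictly convex on the unit ball as soon as `R ‖𝒜‖ m < α`. Moreover `‖z‖² ≤ m Φ(z)` and
`Φ(0) ≤ ‖b‖² / α`, so every `z` with `Φ(z) ≤ Φ(0)` has `‖z‖² ≤ (m / α) ‖b‖² < 1`. Therefore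
`Φ` attains its minimum, every minimizer lies in the unit ball, and strict convexity makes it
unique.
-/

open Matrix WithLp

section EuclideanNorm
variable {ι κ : Type*} [Fintype ι] [Fintype κ]

lemma dotProduct_self_eq_norm_toLp_sq (v : ι → ℝ) : v ⬝ᵥ v = ‖toLp 2 v‖ ^ 2 := by
  rw [← real_inner_self_eq_norm_sq, EuclideanSpace.inner_toLp_toLp, star_trivial]

lemma dotProduct_le_norm_toLp_mul (u v : ι → ℝ) : u ⬝ᵥ v ≤ ‖toLp 2 u‖ * ‖toLp 2 v‖ := by
  have := real_inner_le_norm (toLp 2 v) (toLp 2 u)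
  rwa [EuclideanSpace.inner_toLp_toLp, star_trivial, mul_comm] at this

lemma norm_le_norm_toLp (v : ι → ℝ) : ‖v‖ ≤ ‖toLp 2 v‖ := by
  simpa using (PiLp.lipschitzWith_ofLp 2 fun _ : ι => ℝ).norm_le_mul rfl (toLp 2 v)

lemma norm_le_sqrt_of_dotProduct_self_le {v : ι → ℝ} {r : ℝ} (hv : v ⬝ᵥ v ≤ r) : ‖v‖ ≤ √r :=
  (norm_le_norm_toLp v).trans (Real.le_sqrt_of_sq_le (dotProduct_self_eq_norm_toLp_sq v ▸ hv))

lemma dotProduct_mulVec_convexComb (M : Matrix ι ι ℝ) {a c : ℝ} (hac : a + c = 1)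
    (u v : ι → ℝ) :
    (a • u + c • v) ⬝ᵥ (M *ᵥ (a • u + c • v)) =
      a * (u ⬝ᵥ (M *ᵥ u)) + c * (v ⬝ᵥ (M *ᵥ v)) - a * c * ((u - v) ⬝ᵥ (M *ᵥ (u - v))) := by
  obtain rfl : c = 1 - a := by linarith
  simp only [mulVec_add, mulVec_smul, mulVec_sub, dotProduct_add, add_dotProduct,
    dotProduct_smul, smul_dotProduct, dotProduct_sub, sub_dotProduct, smul_eq_mul]
  ring

lemma dotProduct_mulVec_le_of_norm_mulVec_le {M : Matrix ι ι ℝ} {L : ℝ}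
    (hM : ∀ v, ‖toLp 2 (M *ᵥ v)‖ ≤ L * ‖toLp 2 v‖) (u v : ι → ℝ) :
    u ⬝ᵥ (M *ᵥ u) ≤ v ⬝ᵥ (M *ᵥ v) + L * ‖toLp 2 (u - v)‖ * (‖toLp 2 u‖ + ‖toLp 2 v‖) := by
  have hsplit : u ⬝ᵥ (M *ᵥ u) - v ⬝ᵥ (M *ᵥ v) =
      (u - v) ⬝ᵥ (M *ᵥ u) + v ⬝ᵥ (M *ᵥ (u - v)) := by
    simp only [mulVec_sub, dotProduct_sub, sub_dotProduct]; ring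
  have h₁ := (dotProduct_le_norm_toLp_mul (u - v) (M *ᵥ u)).trans
    (mul_le_mul_of_nonneg_left (hM u) (norm_nonneg _))
  have h₂ := (dotProduct_le_norm_toLp_mul v (M *ᵥ (u - v))).trans
    (mul_le_mul_of_nonneg_left (hM (u - v)) (norm_nonneg _))
  linarith

lemma convex_setOf_dotProduct_add_le (r : ℝ) :
    Convex ℝ {z : (ι → ℝ) × (κ → ℝ) | z.1 ⬝ᵥ z.1 + z.2 ⬝ᵥ z.2 ≤ r} := by
  classical
  intro z hz w hw a c ha hc hac
  have hz₁ := dotProduct_mulVec_convexComb 1 hac z.1 w.1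
  have hz₂ := dotProduct_mulVec_convexComb 1 hac z.2 w.2
  simp only [one_mulVec] at hz₁ hz₂
  simp only [Set.mem_ofPred_eq, Prod.fst_add, Prod.snd_add, Prod.smul_fst,
    Prod.smul_snd] at hz hw ⊢
  rw [hz₁, hz₂, dotProduct_self_eq_norm_toLp_sq (z.1 - w.1),
    dotProduct_self_eq_norm_toLp_sq (z.2 - w.2)]
  have hac₀ := mul_nonneg ha hc
  have hr : a * r + c * r = r := by rw [← add_mul, hac, one_mul]
  linarith [mul_le_mul_of_nonneg_left hz ha, mul_le_mul_of_nonneg_left hw hc,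
    mul_nonneg hac₀ (sq_nonneg ‖toLp 2 (z.1 - w.1)‖),
    mul_nonneg hac₀ (sq_nonneg ‖toLp 2 (z.2 - w.2)‖)]

lemma isCompact_setOf_dotProduct_add_le (r : ℝ) :
    IsCompact {z : (ι → ℝ) × (κ → ℝ) | z.1 ⬝ᵥ z.1 + z.2 ⬝ᵥ z.2 ≤ r} := by
  refine Metric.isCompact_of_isClosed_isBounded (isClosed_le (by fun_prop) continuous_const)
    (isBounded_iff_forall_norm_le.2 ⟨√r, fun z hz => ?_⟩)
  have h₁ := dotProduct_self_eq_norm_toLp_sq z.1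
  have h₂ := dotProduct_self_eq_norm_toLp_sq z.2
  simp only [Set.mem_ofPred_eq] at hz
  exact norm_prod_le_iff.2
    ⟨norm_le_sqrt_of_dotProduct_self_le (by linarith [sq_nonneg ‖toLp 2 z.2‖]),
      norm_le_sqrt_of_dotProduct_self_le (by linarith [sq_nonneg ‖toLp 2 z.1‖])⟩

end EuclideanNorm

section Spectral
variable {ι : Type*} [Fintype ι]

lemma OrthonormalBasis.dotProduct_eq_sum (e : OrthonormalBasis ι ℝ (EuclideanSpace ℝ ι))
    (u v : ι → ℝ) : u ⬝ᵥ v = ∑ i, (u ⬝ᵥ ⇑(e i)) * (v ⬝ᵥ ⇑(e i)) := by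
  have := e.sum_inner_mul_inner (toLp 2 u) (toLp 2 v)
  simp only [EuclideanSpace.inner_eq_star_dotProduct, star_trivial] at this
  rw [dotProduct_comm, ← this]
  simp only [dotProduct_comm _ u]

variable [DecidableEq ι] {A : Matrix ι ι ℝ}

namespace Matrix.IsHermitian
variable (hA : A.IsHermitian)
include hA

lemma mulVec_dotProduct_eigenvectorBasis (u : ι → ℝ) (i : ι) :
    (A *ᵥ u) ⬝ᵥ ⇑(hA.eigenvectorBasis i) = hA.eigenvalues i * (u ⬝ᵥ ⇑(hA.eigenvectorBasis i)) := by
  rw [dotProduct_comm, dotProduct_mulVec, ← mulVec_transpose,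
    ← conjTranspose_eq_transpose_of_trivial, hA.eq, mulVec_eigenvectorBasis, smul_dotProduct,
    smul_eq_mul, dotProduct_comm]

lemma dotProduct_mulVec_eq_sum (u : ι → ℝ) :
    u ⬝ᵥ (A *ᵥ u) = ∑ i, hA.eigenvalues i * (u ⬝ᵥ ⇑(hA.eigenvectorBasis i)) ^ 2 := by
  rw [hA.eigenvectorBasis.dotProduct_eq_sum]
  refine Finset.sum_congr rfl fun i _ => ?_
  rw [hA.mulVec_dotProduct_eigenvectorBasis]; ring

lemma mulVec_dotProduct_mulVec_eq_sum (u : ι → ℝ) :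
    (A *ᵥ u) ⬝ᵥ (A *ᵥ u) = ∑ i, hA.eigenvalues i ^ 2 * (u ⬝ᵥ ⇑(hA.eigenvectorBasis i)) ^ 2 := by
  rw [hA.eigenvectorBasis.dotProduct_eq_sum]
  refine Finset.sum_congr rfl fun i _ => ?_
  rw [hA.mulVec_dotProduct_eigenvectorBasis]; ring

end Matrix.IsHermitian

namespace Matrix.PosDef
variable (hA : A.PosDef)
include hA

lemma inv_mulVec_mulVec (u : ι → ℝ) : A⁻¹ *ᵥ (A *ᵥ u) = u := by
  rw [mulVec_mulVec, nonsing_inv_mul _ ((isUnit_iff_isUnit_det A).mp hA.isUnit), one_mulVec]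

lemma iInf_eigenvalues_pos [Nonempty ι] : 0 < ⨅ i, hA.1.eigenvalues i := by
  obtain ⟨i, hi⟩ := exists_eq_ciInf_of_finite (f := hA.1.eigenvalues)
  exact hi ▸ hA.eigenvalues_pos i

lemma inv_iInf_eigenvalues_nonneg : 0 ≤ (⨅ i, hA.1.eigenvalues i)⁻¹ :=
  inv_nonneg.2 (Real.iInf_nonneg fun i => (hA.eigenvalues_pos i).le)

lemma iSup_eigenvalues_nonneg : 0 ≤ ⨆ i, hA.1.eigenvalues i :=
  Real.iSup_nonneg fun i => (hA.eigenvalues_pos i).le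

lemma norm_toLp_inv_mulVec_le (v : ι → ℝ) :
    ‖toLp 2 (A⁻¹ *ᵥ v)‖ ≤ (⨅ i, hA.1.eigenvalues i)⁻¹ * ‖toLp 2 v‖ := by
  obtain ⟨u, rfl⟩ := mulVec_surjective_iff_isUnit.mpr hA.isUnit v
  rw [← pow_le_pow_iff_left₀ (norm_nonneg _)
      (mul_nonneg hA.inv_iInf_eigenvalues_nonneg (norm_nonneg _)) two_ne_zero,
    mul_pow, ← dotProduct_self_eq_norm_toLp_sq, ← dotProduct_self_eq_norm_toLp_sq,
    hA.inv_mulVec_mulVec, hA.1.mulVec_dotProduct_mulVec_eq_sum,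
    hA.1.eigenvectorBasis.dotProduct_eq_sum, Finset.mul_sum]
  refine Finset.sum_le_sum fun i _ => ?_
  have : Nonempty ι := ⟨i⟩
  have hi : 1 ≤ (⨅ j, hA.1.eigenvalues j)⁻¹ * hA.1.eigenvalues i := by
    rw [← div_eq_inv_mul, one_le_div hA.iInf_eigenvalues_pos]
    exact ciInf_le (Finite.bddBelow_range _) i
  calc _ = (u ⬝ᵥ ⇑(hA.1.eigenvectorBasis i)) ^ 2 := (sq _).symm
    _ ≤ ((⨅ j, hA.1.eigenvalues j)⁻¹ * hA.1.eigenvalues i) ^ 2 *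
        (u ⬝ᵥ ⇑(hA.1.eigenvectorBasis i)) ^ 2 :=
      le_mul_of_one_le_left (sq_nonneg _) (one_le_pow₀ hi)
    _ = _ := by ring

lemma dotProduct_self_le_iSup_mul (v : ι → ℝ) :
    v ⬝ᵥ v ≤ (⨆ i, hA.1.eigenvalues i) * (v ⬝ᵥ (A⁻¹ *ᵥ v)) := by
  obtain ⟨u, rfl⟩ := mulVec_surjective_iff_isUnit.mpr hA.isUnit v
  rw [hA.inv_mulVec_mulVec, dotProduct_comm (A *ᵥ u) u, hA.1.dotProduct_mulVec_eq_sum,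
    hA.1.mulVec_dotProduct_mulVec_eq_sum, Finset.mul_sum]
  refine Finset.sum_le_sum fun i _ => ?_
  have hi : hA.1.eigenvalues i ≤ ⨆ j, hA.1.eigenvalues j := le_ciSup (Finite.bddAbove_range _) i
  have := hA.eigenvalues_pos i
  rw [← mul_assoc, sq]
  gcongr

lemma dotProduct_inv_mulVec_le (v : ι → ℝ) :
    v ⬝ᵥ (A⁻¹ *ᵥ v) ≤ (⨅ i, hA.1.eigenvalues i)⁻¹ * (v ⬝ᵥ v) := by
  calc v ⬝ᵥ (A⁻¹ *ᵥ v) ≤ ‖toLp 2 v‖ * ((⨅ i, hA.1.eigenvalues i)⁻¹ * ‖toLp 2 v‖) :=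
        (dotProduct_le_norm_toLp_mul _ _).trans
          (mul_le_mul_of_nonneg_left (hA.norm_toLp_inv_mulVec_le v) (norm_nonneg _))
    _ = _ := by rw [dotProduct_self_eq_norm_toLp_sq]; ring

lemma dotProduct_inv_mulVec_nonneg (v : ι → ℝ) : 0 ≤ v ⬝ᵥ (A⁻¹ *ᵥ v) := by
  simpa using hA.inv.posSemidef.dotProduct_mulVec_nonneg v

lemma dotProduct_inv_mulVec_pos {v : ι → ℝ} (hv : v ≠ 0) : 0 < v ⬝ᵥ (A⁻¹ *ᵥ v) := by
  simpa using hA.inv.dotProduct_mulVec_pos hv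

end Matrix.PosDef

end Spectral

section Bilinear
variable {𝕜 E F G : Type*} [NontriviallyNormedField 𝕜] [CompleteSpace 𝕜]
  [NormedAddCommGroup E] [NormedSpace 𝕜 E] [FiniteDimensional 𝕜 E]
  [NormedAddCommGroup F] [NormedSpace 𝕜 F] [FiniteDimensional 𝕜 F]
  [NormedAddCommGroup G] [NormedSpace 𝕜 G]

noncomputable def LinearMap.toContinuousLinearMap₂ (f : E →ₗ[𝕜] F →ₗ[𝕜] G) :
    E →L[𝕜] F →L[𝕜] G :=
  LinearMap.toContinuousLinearMap (LinearMap.toContinuousLinearMap.toLinearMap ∘ₗ f)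

lemma LinearMap.continuous_uncurry_of_finiteDimensional (f : E →ₗ[𝕜] F →ₗ[𝕜] G) :
    Continuous fun z : E × F => f z.1 z.2 :=
  f.toContinuousLinearMap₂.continuous₂

lemma LinearMap.exists_bound_of_finiteDimensional₂ (f : E →ₗ[𝕜] F →ₗ[𝕜] G) :
    ∃ C, 0 ≤ C ∧ ∀ x y, ‖f x y‖ ≤ C * ‖x‖ * ‖y‖ :=
  ⟨_, f.toContinuousLinearMap₂.opNorm_nonneg, f.toContinuousLinearMap₂.le_opNorm₂⟩

end Bilinear

lemma LinearMap.exists_norm_toLp_le {ι κ ν : Type*} [Fintype ι] [Fintype κ] [Fintype ν]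
    (𝒜 : (ι → ℝ) →ₗ[ℝ] (κ → ℝ) →ₗ[ℝ] (ν → ℝ)) :
    ∃ C, 0 ≤ C ∧ ∀ y x, ‖toLp 2 (𝒜 y x)‖ ≤ C * ‖toLp 2 y‖ * ‖toLp 2 x‖ :=
  ((𝒜.compl₁₂ (WithLp.linearEquiv 2 ℝ (ι → ℝ)).toLinearMap
    (WithLp.linearEquiv 2 ℝ (κ → ℝ)).toLinearMap).compr₂
      (WithLp.linearEquiv 2 ℝ (ν → ℝ)).symm.toLinearMap).exists_bound_of_finiteDimensional₂.imp
    fun _ ⟨hC, h⟩ => ⟨hC, fun y x => h (toLp 2 y) (toLp 2 x)⟩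

section Tikhonov
variable {ι κ ν : Type*} [Fintype κ]
  (A₀ : Matrix ν κ ℝ) (𝒜 : (ι → ℝ) →ₗ[ℝ] (κ → ℝ) →ₗ[ℝ] (ν → ℝ)) (b : ν → ℝ)

def tikhonovResidual (z : (ι → ℝ) × (κ → ℝ)) : ν → ℝ := b - A₀ *ᵥ z.2 - 𝒜 z.1 z.2

lemma tikhonovResidual_convexComb {a c : ℝ} (hac : a + c = 1) (z w : (ι → ℝ) × (κ → ℝ)) :
    tikhonovResidual A₀ 𝒜 b (a • z + c • w) =
      a • tikhonovResidual A₀ 𝒜 b z + c • tikhonovResidual A₀ 𝒜 b w +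
        (a * c) • 𝒜 (z.1 - w.1) (z.2 - w.2) := by
  obtain rfl : c = 1 - a := by linarith
  simp only [tikhonovResidual, Prod.fst_add, Prod.snd_add, Prod.smul_fst, Prod.smul_snd, map_add,
    map_smul, map_sub, LinearMap.add_apply, LinearMap.smul_apply, LinearMap.sub_apply,
    mulVec_add, mulVec_smul]
  module

variable [Fintype ι] [Fintype ν]

lemma continuous_tikhonovResidual : Continuous (tikhonovResidual A₀ 𝒜 b) := by
  have := 𝒜.continuous_uncurry_of_finiteDimensional
  unfold tikhonovResidual
  fun_prop

lemma exists_norm_toLp_tikhonovResidual_le (r : ℝ) :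
    ∃ R, 0 ≤ R ∧ ∀ z ∈ {z : (ι → ℝ) × (κ → ℝ) | z.1 ⬝ᵥ z.1 + z.2 ⬝ᵥ z.2 ≤ r},
      ‖toLp 2 (tikhonovResidual A₀ 𝒜 b z)‖ ≤ R := by
  have := continuous_tikhonovResidual A₀ 𝒜 b
  obtain ⟨R, hR⟩ := (isCompact_setOf_dotProduct_add_le r).exists_bound_of_continuousOn
    (f := fun z => toLp 2 (tikhonovResidual A₀ 𝒜 b z)) (by fun_prop)
  exact ⟨max R 0, le_max_right _ _, fun z hz => (hR z hz).trans (le_max_left _ _)⟩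

variable [DecidableEq ν] {Γ₁ : Matrix ν ν ℝ}

lemma tikhonovResidual_dotProduct_convexComb_le (hΓ₁ : Γ₁.PosDef)
    {s : Set ((ι → ℝ) × (κ → ℝ))} (hs : Convex ℝ s) {R C : ℝ}
    (hC : ∀ y x, ‖toLp 2 (𝒜 y x)‖ ≤ C * ‖toLp 2 y‖ * ‖toLp 2 x‖)
    (hR : ∀ z ∈ s, ‖toLp 2 (tikhonovResidual A₀ 𝒜 b z)‖ ≤ R) {z w : (ι → ℝ) × (κ → ℝ)}
    (hz : z ∈ s) (hw : w ∈ s) {a c : ℝ} (ha : 0 ≤ a) (hc : 0 ≤ c) (hac : a + c = 1) :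
    tikhonovResidual A₀ 𝒜 b (a • z + c • w) ⬝ᵥ
        (Γ₁⁻¹ *ᵥ tikhonovResidual A₀ 𝒜 b (a • z + c • w)) ≤
      a * (tikhonovResidual A₀ 𝒜 b z ⬝ᵥ (Γ₁⁻¹ *ᵥ tikhonovResidual A₀ 𝒜 b z)) +
      c * (tikhonovResidual A₀ 𝒜 b w ⬝ᵥ (Γ₁⁻¹ *ᵥ tikhonovResidual A₀ 𝒜 b w)) +
      a * c * ((⨅ i, hΓ₁.1.eigenvalues i)⁻¹ * (2 * R) *
        (C * ‖toLp 2 (z.1 - w.1)‖ * ‖toLp 2 (z.2 - w.2)‖)) := by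
  set r := tikhonovResidual A₀ 𝒜 b
  set u := a • r z + c • r w
  have hα := hΓ₁.inv_iInf_eigenvalues_nonneg
  have hu : ‖toLp 2 u‖ ≤ R := by
    calc ‖toLp 2 u‖ ≤ a * ‖toLp 2 (r z)‖ + c * ‖toLp 2 (r w)‖ := by
          simpa [u, norm_smul, abs_of_nonneg ha, abs_of_nonneg hc] using
            norm_add_le (toLp 2 (a • r z)) (toLp 2 (c • r w))
      _ ≤ a * R + c * R := by gcongr <;> exact hR _ ‹_›
      _ = R := by rw [← add_mul, hac, one_mul]
  have hrt : ‖toLp 2 (r (a • z + c • w))‖ ≤ R := hR _ (hs hz hw ha hc hac)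
  have hdiff : ‖toLp 2 (r (a • z + c • w) - u)‖ ≤
      a * c * (C * ‖toLp 2 (z.1 - w.1)‖ * ‖toLp 2 (z.2 - w.2)‖) := by
    rw [show r (a • z + c • w) = u + (a * c) • 𝒜 (z.1 - w.1) (z.2 - w.2) from
        tikhonovResidual_convexComb A₀ 𝒜 b hac z w,
      add_sub_cancel_left, toLp_smul, norm_smul, Real.norm_of_nonneg (mul_nonneg ha hc)]
    exact mul_le_mul_of_nonneg_left (hC _ _) (mul_nonneg ha hc)
  have hcurv := mul_nonneg (mul_nonneg ha hc) (hΓ₁.dotProduct_inv_mulVec_nonneg (r z - r w))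
  calc _ ≤ u ⬝ᵥ (Γ₁⁻¹ *ᵥ u) + (⨅ i, hΓ₁.1.eigenvalues i)⁻¹ *
        ‖toLp 2 (r (a • z + c • w) - u)‖ * (‖toLp 2 (r (a • z + c • w))‖ + ‖toLp 2 u‖) :=
        dotProduct_mulVec_le_of_norm_mulVec_le hΓ₁.norm_toLp_inv_mulVec_le _ _
    _ ≤ u ⬝ᵥ (Γ₁⁻¹ *ᵥ u) + (⨅ i, hΓ₁.1.eigenvalues i)⁻¹ *
        (a * c * (C * ‖toLp 2 (z.1 - w.1)‖ * ‖toLp 2 (z.2 - w.2)‖)) * (R + R) :=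
        add_le_add le_rfl (mul_le_mul (mul_le_mul_of_nonneg_left hdiff hα) (add_le_add hrt hu)
          (by positivity) (mul_nonneg hα ((norm_nonneg _).trans hdiff)))
    _ ≤ _ := by
        rw [dotProduct_mulVec_convexComb _ hac]
        linarith

variable [DecidableEq ι] [DecidableEq κ] {Γ₂ : Matrix ι ι ℝ} {Γ₃ : Matrix κ κ ℝ}

lemma dotProduct_add_le_mul_prior (hΓ₂ : Γ₂.PosDef) (hΓ₃ : Γ₃.PosDef) (y : ι → ℝ) (x : κ → ℝ) :
    y ⬝ᵥ y + x ⬝ᵥ x ≤ max (⨆ i, hΓ₂.1.eigenvalues i) (⨆ i, hΓ₃.1.eigenvalues i) *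
      (y ⬝ᵥ (Γ₂⁻¹ *ᵥ y) + x ⬝ᵥ (Γ₃⁻¹ *ᵥ x)) := by
  rw [mul_add]
  exact add_le_add
    ((hΓ₂.dotProduct_self_le_iSup_mul y).trans (mul_le_mul_of_nonneg_right
      (le_max_left _ _) (hΓ₂.dotProduct_inv_mulVec_nonneg y)))
    ((hΓ₃.dotProduct_self_le_iSup_mul x).trans (mul_le_mul_of_nonneg_right
      (le_max_right _ _) (hΓ₃.dotProduct_inv_mulVec_nonneg x)))

lemma dotProduct_inv_mulVec_add_pos (hΓ₂ : Γ₂.PosDef) (hΓ₃ : Γ₃.PosDef)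
    {z : (ι → ℝ) × (κ → ℝ)} (hz : z ≠ 0) : 0 < z.1 ⬝ᵥ (Γ₂⁻¹ *ᵥ z.1) + z.2 ⬝ᵥ (Γ₃⁻¹ *ᵥ z.2) := by
  rcases eq_or_ne z.1 0 with h₁ | h₁
  · exact add_pos_of_nonneg_of_pos (hΓ₂.dotProduct_inv_mulVec_nonneg _)
      (hΓ₃.dotProduct_inv_mulVec_pos fun h₂ => hz (Prod.ext h₁ h₂))
  · exact add_pos_of_pos_of_nonneg (hΓ₂.dotProduct_inv_mulVec_pos h₁)
      (hΓ₃.dotProduct_inv_mulVec_nonneg _)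

variable (Γ₁ Γ₂ Γ₃)

noncomputable def tikhonov (z : (ι → ℝ) × (κ → ℝ)) : ℝ :=
  tikhonovResidual A₀ 𝒜 b z ⬝ᵥ (Γ₁⁻¹ *ᵥ tikhonovResidual A₀ 𝒜 b z) + z.1 ⬝ᵥ (Γ₂⁻¹ *ᵥ z.1) +
    z.2 ⬝ᵥ (Γ₃⁻¹ *ᵥ z.2)

lemma continuous_tikhonov : Continuous (tikhonov A₀ 𝒜 b Γ₁ Γ₂ Γ₃) := by
  have := continuous_tikhonovResidual A₀ 𝒜 b
  unfold tikhonov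
  fun_prop

variable {Γ₁ Γ₂ Γ₃}

lemma tikhonov_zero_le (hΓ₁ : Γ₁.PosDef) :
    tikhonov A₀ 𝒜 b Γ₁ Γ₂ Γ₃ 0 ≤ (⨅ i, hΓ₁.1.eigenvalues i)⁻¹ * (b ⬝ᵥ b) := by
  simpa [tikhonov, tikhonovResidual] using hΓ₁.dotProduct_inv_mulVec_le b

lemma dotProduct_add_le_mul_tikhonov (hΓ₁ : Γ₁.PosDef) (hΓ₂ : Γ₂.PosDef) (hΓ₃ : Γ₃.PosDef)
    (z : (ι → ℝ) × (κ → ℝ)) :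
    z.1 ⬝ᵥ z.1 + z.2 ⬝ᵥ z.2 ≤
      max (⨆ i, hΓ₂.1.eigenvalues i) (⨆ i, hΓ₃.1.eigenvalues i) * tikhonov A₀ 𝒜 b Γ₁ Γ₂ Γ₃ z := by
  have h₁ := mul_nonneg (hΓ₂.iSup_eigenvalues_nonneg.trans
    (le_max_left _ (⨆ i, hΓ₃.1.eigenvalues i)))
    (hΓ₁.dotProduct_inv_mulVec_nonneg (tikhonovResidual A₀ 𝒜 b z))
  have := dotProduct_add_le_mul_prior hΓ₂ hΓ₃ z.1 z.2
  rw [tikhonov, add_assoc, mul_add]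
  linarith

lemma dotProduct_add_le_of_tikhonov_le_zero (hΓ₁ : Γ₁.PosDef) (hΓ₂ : Γ₂.PosDef)
    (hΓ₃ : Γ₃.PosDef) {z : (ι → ℝ) × (κ → ℝ)}
    (hz : tikhonov A₀ 𝒜 b Γ₁ Γ₂ Γ₃ z ≤ tikhonov A₀ 𝒜 b Γ₁ Γ₂ Γ₃ 0) :
    z.1 ⬝ᵥ z.1 + z.2 ⬝ᵥ z.2 ≤
      max (⨆ i, hΓ₂.1.eigenvalues i) (⨆ i, hΓ₃.1.eigenvalues i) /
        (⨅ i, hΓ₁.1.eigenvalues i) * (b ⬝ᵥ b) :=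
  calc _ ≤ _ := dotProduct_add_le_mul_tikhonov A₀ 𝒜 b hΓ₁ hΓ₂ hΓ₃ z
    _ ≤ _ := mul_le_mul_of_nonneg_left (hz.trans (tikhonov_zero_le A₀ 𝒜 b hΓ₁))
        (hΓ₂.iSup_eigenvalues_nonneg.trans (le_max_left _ _))
    _ = _ := by ring

theorem strictConvexOn_tikhonov (hΓ₁ : Γ₁.PosDef) (hΓ₂ : Γ₂.PosDef) (hΓ₃ : Γ₃.PosDef)
    {s : Set ((ι → ℝ) × (κ → ℝ))} (hs : Convex ℝ s) {R C : ℝ} (hC₀ : 0 ≤ C)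
    (hC : ∀ y x, ‖toLp 2 (𝒜 y x)‖ ≤ C * ‖toLp 2 y‖ * ‖toLp 2 x‖)
    (hR : ∀ z ∈ s, ‖toLp 2 (tikhonovResidual A₀ 𝒜 b z)‖ ≤ R)
    (hsmall : R * C * max (⨆ i, hΓ₂.1.eigenvalues i) (⨆ i, hΓ₃.1.eigenvalues i) <
      ⨅ i, hΓ₁.1.eigenvalues i) :
    StrictConvexOn ℝ s (tikhonov A₀ 𝒜 b Γ₁ Γ₂ Γ₃) := by
  refine ⟨hs, fun z hz w hw hzw a c ha hc hac => ?_⟩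
  set α := ⨅ i, hΓ₁.1.eigenvalues i
  set m := max (⨆ i, hΓ₂.1.eigenvalues i) (⨆ i, hΓ₃.1.eigenvalues i)
  set δy := z.1 - w.1
  set δx := z.2 - w.2
  set P := δy ⬝ᵥ (Γ₂⁻¹ *ᵥ δy) + δx ⬝ᵥ (Γ₃⁻¹ *ᵥ δx)
  have hP : 0 < P := dotProduct_inv_mulVec_add_pos hΓ₂ hΓ₃ (sub_ne_zero.2 hzw)
  have hmP : ‖toLp 2 δy‖ ^ 2 + ‖toLp 2 δx‖ ^ 2 ≤ m * P := by
    rw [← dotProduct_self_eq_norm_toLp_sq, ← dotProduct_self_eq_norm_toLp_sq]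
    exact dotProduct_add_le_mul_prior hΓ₂ hΓ₃ δy δx
  have hR₀ : 0 ≤ R := (norm_nonneg _).trans (hR z hz)
  have hm₀ : 0 ≤ m := hΓ₂.iSup_eigenvalues_nonneg.trans (le_max_left _ _)
  have hα : 0 < α := lt_of_le_of_lt (by positivity) hsmall
  have hdefect : α⁻¹ * (2 * R) * (C * ‖toLp 2 δy‖ * ‖toLp 2 δx‖) < P := by
    have hRC : 0 ≤ α⁻¹ * (R * C) := by positivity
    calc α⁻¹ * (2 * R) * (C * ‖toLp 2 δy‖ * ‖toLp 2 δx‖)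
        = α⁻¹ * (R * C) * (2 * ‖toLp 2 δy‖ * ‖toLp 2 δx‖) := by ring
      _ ≤ α⁻¹ * (R * C) * (m * P) :=
        mul_le_mul_of_nonneg_left ((two_mul_le_add_sq _ _).trans hmP) hRC
      _ = α⁻¹ * (R * C * m) * P := by ring
      _ < α⁻¹ * α * P := by gcongr
      _ = P := by rw [inv_mul_cancel₀ hα.ne', one_mul]
  have hdata := tikhonovResidual_dotProduct_convexComb_le A₀ 𝒜 b hΓ₁ hs hC hR hz hw ha.le hc.le hac
  have hprior₂ := dotProduct_mulVec_convexComb Γ₂⁻¹ hac z.1 w.1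
  have hprior₃ := dotProduct_mulVec_convexComb Γ₃⁻¹ hac z.2 w.2
  simp only [tikhonov, Prod.fst_add, Prod.snd_add, Prod.smul_fst, Prod.smul_snd, smul_eq_mul]
  linarith [mul_lt_mul_of_pos_left hdefect (mul_pos ha hc)]

end Tikhonov

theorem unique_global_minimizer_of_strong_prior_general {l p n : ℕ} [NeZero l]
    (A₀ : Matrix (Fin l) (Fin n) ℝ) (b : Fin l → ℝ)
    (𝒜 : (Fin p → ℝ) →ₗ[ℝ] (Fin n → ℝ) →ₗ[ℝ] (Fin l → ℝ)) :
    ∃ μ₀ : ℝ, 0 < μ₀ ∧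
      ∀ (Γ₁ : Matrix (Fin l) (Fin l) ℝ) (Γ₂ : Matrix (Fin p) (Fin p) ℝ)
        (Γ₃ : Matrix (Fin n) (Fin n) ℝ)
        (hΓ₁ : Γ₁.PosDef) (hΓ₂ : Γ₂.PosDef) (hΓ₃ : Γ₃.PosDef)
        (Φ : (Fin p → ℝ) × (Fin n → ℝ) → ℝ),
        (∀ y x, Φ (y, x) =
          (b - A₀ *ᵥ x - 𝒜 y x) ⬝ᵥ (Γ₁⁻¹ *ᵥ (b - A₀ *ᵥ x - 𝒜 y x))
          + y ⬝ᵥ (Γ₂⁻¹ *ᵥ y) + x ⬝ᵥ (Γ₃⁻¹ *ᵥ x)) →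
        max (⨆ i, hΓ₂.1.eigenvalues i) (⨆ i, hΓ₃.1.eigenvalues i) /
            (⨅ i, hΓ₁.1.eigenvalues i) ≤ μ₀ →
        ∃ ρ : ℝ,
          StrictConvexOn ℝ
            {z : (Fin p → ℝ) × (Fin n → ℝ) | z.1 ⬝ᵥ z.1 + z.2 ⬝ᵥ z.2 ≤ ρ ^ 2} Φ ∧
          (∃! z : (Fin p → ℝ) × (Fin n → ℝ), ∀ w, Φ z ≤ Φ w) ∧
          (∀ z : (Fin p → ℝ) × (Fin n → ℝ), (∀ w, Φ z ≤ Φ w) →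
            z.1 ⬝ᵥ z.1 + z.2 ⬝ᵥ z.2 ≤ ρ ^ 2) := by
  obtain ⟨C, hC₀, hC⟩ := 𝒜.exists_norm_toLp_le
  obtain ⟨R, hR₀, hR⟩ := exists_norm_toLp_tikhonovResidual_le A₀ 𝒜 b (1 ^ 2)
  have hbb : 0 ≤ b ⬝ᵥ b := by rw [dotProduct_self_eq_norm_toLp_sq]; positivity
  -- The first bound confines every minimizer to the unit ball, the second lets the prior's
  -- curvature dominate the bilinear term there.
  refine ⟨min (b ⬝ᵥ b + 1)⁻¹ (R * C + 1)⁻¹, by positivity, ?_⟩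
  intro Γ₁ Γ₂ Γ₃ hΓ₁ hΓ₂ hΓ₃ Φ hΦ hμ
  obtain rfl : Φ = tikhonov A₀ 𝒜 b Γ₁ Γ₂ Γ₃ := funext fun z => hΦ z.1 z.2
  have hα := hΓ₁.iInf_eigenvalues_pos
  have hsmall : R * C * max (⨆ i, hΓ₂.1.eigenvalues i) (⨆ i, hΓ₃.1.eigenvalues i) <
      ⨅ i, hΓ₁.1.eigenvalues i := by
    have := (div_le_iff₀ hα).1 (hμ.trans (min_le_right _ _))
    rw [inv_mul_eq_div, le_div_iff₀ (by positivity)] at this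
    nlinarith [mul_nonneg hR₀ hC₀]
  have hball : ∀ z, tikhonov A₀ 𝒜 b Γ₁ Γ₂ Γ₃ z ≤ tikhonov A₀ 𝒜 b Γ₁ Γ₂ Γ₃ 0 →
      z.1 ⬝ᵥ z.1 + z.2 ⬝ᵥ z.2 < 1 ^ 2 := fun z hz => by
    refine (dotProduct_add_le_of_tikhonov_le_zero A₀ 𝒜 b hΓ₁ hΓ₂ hΓ₃ hz).trans_lt ?_
    calc _ ≤ (b ⬝ᵥ b + 1)⁻¹ * (b ⬝ᵥ b) := by gcongr; exact hμ.trans (min_le_left _ _)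
      _ < 1 ^ 2 := by rw [inv_mul_lt_iff₀ (by positivity)]; linarith
  have hconv := strictConvexOn_tikhonov A₀ 𝒜 b hΓ₁ hΓ₂ hΓ₃ (convex_setOf_dotProduct_add_le _)
    hC₀ hC hR hsmall
  obtain ⟨z, hz⟩ := (continuous_tikhonov A₀ 𝒜 b Γ₁ Γ₂ Γ₃).exists_forall_le_of_isBounded 0
    ((isCompact_setOf_dotProduct_add_le _).isBounded.subset fun z hz => (hball z hz).le)
  exact ⟨1, hconv, ⟨z, hz, fun w hw => hconv.eq_of_isMinOn (fun v _ => hw v) (fun v _ => hz v)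
    (hball w (hw 0)).le (hball z (hz 0)).le⟩, fun w hw => (hball w (hw 0)).le⟩

/-- If the prior is strong enough and/or the noise level is high enough (quantified
by `μ ≤ μ₀` for a constant `μ₀` depending only on `A₀`, `𝒜` and `b`), then the
Tikhonov functional has a unique global minimizer, which lies in an origin-centered
Euclidean ball on which the functional is strictly convex. -/
theorem unique_global_minimizer_of_strong_prior {l p n : ℕ} [NeZero l] [NeZero p] [NeZero n]
    (A₀ : Matrix (Fin l) (Fin n) ℝ) (b : Fin l → ℝ)
    (𝒜 : (Fin p → ℝ) →ₗ[ℝ] (Fin n → ℝ) →ₗ[ℝ] (Fin l → ℝ))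
    (h𝒜 : ∃ y₀ x₀, 𝒜 y₀ x₀ ≠ 0) :
    ∃ μ₀ : ℝ, 0 < μ₀ ∧
      ∀ (Γ₁ : Matrix (Fin l) (Fin l) ℝ) (Γ₂ : Matrix (Fin p) (Fin p) ℝ)
        (Γ₃ : Matrix (Fin n) (Fin n) ℝ)
        (hΓ₁ : Γ₁.PosDef) (hΓ₂ : Γ₂.PosDef) (hΓ₃ : Γ₃.PosDef)
        (Φ : (Fin p → ℝ) × (Fin n → ℝ) → ℝ),
        (∀ y x, Φ (y, x) =
          (b - A₀ *ᵥ x - 𝒜 y x) ⬝ᵥ (Γ₁⁻¹ *ᵥ (b - A₀ *ᵥ x - 𝒜 y x))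
          + y ⬝ᵥ (Γ₂⁻¹ *ᵥ y) + x ⬝ᵥ (Γ₃⁻¹ *ᵥ x)) →
        max (⨆ i, hΓ₂.1.eigenvalues i) (⨆ i, hΓ₃.1.eigenvalues i) /
            (⨅ i, hΓ₁.1.eigenvalues i) ≤ μ₀ →
        ∃ ρ : ℝ,
          StrictConvexOn ℝ
            {z : (Fin p → ℝ) × (Fin n → ℝ) | z.1 ⬝ᵥ z.1 + z.2 ⬝ᵥ z.2 ≤ ρ ^ 2} Φ ∧
          (∃! z : (Fin p → ℝ) × (Fin n → ℝ), ∀ w, Φ z ≤ Φ w) ∧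
          (∀ z : (Fin p → ℝ) × (Fin n → ℝ), (∀ w, Φ z ≤ Φ w) →
            z.1 ⬝ᵥ z.1 + z.2 ⬝ᵥ z.2 ≤ ρ ^ 2) :=
  unique_global_minimizer_of_strong_prior_general A₀ b 𝒜
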